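/- For every n ≥ 0, the number of Dyck paths of semilength n that have no peak at any height in {2r+3 : r ≥ 0} (i.e., no peak at an odd height ≥ 3) and have no up-run of length greater than 3 equals G_{n+1}, the (n+1)-th generalized Catalan number. -/

import Mathlib

/-- The height of a path (list of up/down steps, `true` = up = +1, `false` = down = −1)
after its first `k` steps. -/
def heightAt (p : List Bool) (k : ℕ) : ℤ :=
  ((p.take k).count true : ℤ) - ((p.take k).count false : ℤ)

/-- A Dyck path: all partial sums nonnegative and total sum zero. -/
def IsDyck (p : List Bool) : Prop :=
  (∀ k, 0 ≤ heightAt p k) ∧ heightAt p p.length = 0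

/-- A peak at height `h`: an up-step immediately followed by a down-step,
the height after the up-step being `h`. -/
def HasPeakAt (p : List Bool) (h : ℤ) : Prop :=
  ∃ i, p[i]? = some true ∧ p[i+1]? = some false ∧ heightAt p (i+1) = h

/-- A valley at height `h`: a down-step immediately followed by an up-step,
the height after the down-step being `h`. -/
def HasValleyAt (p : List Bool) (h : ℤ) : Prop :=
  ∃ i, p[i]? = some false ∧ p[i+1]? = some true ∧ heightAt p (i+1) = h

/-- `p` has an up-run of length `m`: a maximal block of exactly `m` consecutive up-steps. -/
def HasUpRun (p : List Bool) (m : ℕ) : Prop :=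
  ∃ i, (∀ j, j < m → p[i+j]? = some true) ∧
    (i = 0 ∨ p[i-1]? = some false) ∧
    (p[i+m]? = some false ∨ i + m = p.length)

/-- `p` has a down-run of length `m`: a maximal block of exactly `m` consecutive down-steps. -/
def HasDownRun (p : List Bool) (m : ℕ) : Prop :=
  ∃ i, (∀ j, j < m → p[i+j]? = some false) ∧
    (i = 0 ∨ p[i-1]? = some true) ∧
    (p[i+m]? = some true ∨ i + m = p.length)

/-- Generating function of the set of Dyck paths satisfying `Q`:
the coefficient of `z^n` is the number of such paths of semilength `n`. -/
noncomputable def genFun (Q : List Bool → Prop) : PowerSeries ℕ :=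
  PowerSeries.mk fun n => Set.ncard {p : List Bool | p.length = 2 * n ∧ IsDyck p ∧ Q p}

/-- The generalized Catalan numbers: `G 0 = 1`, `G 1 = 1`,
`G (n+2) = G (n+1) + ∑_{k=1}^{n} G k * G (n-k)`. -/
def genCatalan : ℕ → ℕ
  | 0 => 1
  | 1 => 1
  | n + 2 => genCatalan (n + 1) +
      ∑ k ∈ (Finset.Icc 1 n).attach, genCatalan k * genCatalan (n - k.1)
  decreasing_by
  · omega
  · have := Finset.mem_Icc.mp k.2; omega
  · have := Finset.mem_Icc.mp k.2; omega

/-!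
Cut a nonempty Dyck path at its first return to the axis, `p = U q D r`. A peak of `q` at height
`h` is a peak of `p` at height `h + 1`, and a block of four up-steps of `p` lies in `q`, in `r`, or
is the initial `U` followed by three initial up-steps of `q`. So the relevant classes are indexed
by a lift `s` (a peak at height `h` counts as one at height `h + s`) and a bound `b` on the initial
up-run. Since peaks of Dyck paths have height `≥ 1`, the lifts `s` and `s + 2` agree for `s ≥ 1`,
and the decomposition turns the counts for the lifts `0, 1, 2` into convolution recurrences. These
show that the count for lift `1` obeys the recurrence of `G` and that the count for lift `0` is
its shift.
-/

open Finset

def stepValue (x : Bool) : ℤ := if x then 1 else -1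

@[simp] lemma stepValue_true : stepValue true = 1 := rfl

@[simp] lemma stepValue_false : stepValue false = -1 := rfl

def pathHeight (l : List Bool) : ℤ := (l.count true : ℤ) - (l.count false : ℤ)

@[simp] lemma pathHeight_nil : pathHeight [] = 0 := rfl

@[simp] lemma pathHeight_cons (x : Bool) (l : List Bool) :
    pathHeight (x :: l) = stepValue x + pathHeight l := by
  cases x <;> simp only [pathHeight, List.count_cons_self, List.count_cons_of_ne, ne_eq,
    Bool.false_eq_true, Bool.true_eq_false, not_false_eq_true, stepValue_true, stepValue_false] <;>
    push_cast <;> ring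

@[simp] lemma pathHeight_append (a b : List Bool) :
    pathHeight (a ++ b) = pathHeight a + pathHeight b := by
  simp only [pathHeight, List.count_append]; push_cast; ring

lemma heightAt_eq_pathHeight_take (p : List Bool) (k : ℕ) :
    heightAt p k = pathHeight (p.take k) := rfl

@[simp] lemma heightAt_zero (p : List Bool) : heightAt p 0 = 0 := rfl

@[simp] lemma heightAt_cons_succ (x : Bool) (l : List Bool) (k : ℕ) :
    heightAt (x :: l) (k + 1) = stepValue x + heightAt l k := by
  simp [heightAt_eq_pathHeight_take]

lemma heightAt_of_length_le {p : List Bool} {k : ℕ} (h : p.length ≤ k) :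
    heightAt p k = pathHeight p := by
  rw [heightAt_eq_pathHeight_take, List.take_of_length_le h]

lemma heightAt_append_of_le {a : List Bool} (b : List Bool) {k : ℕ} (h : k ≤ a.length) :
    heightAt (a ++ b) k = heightAt a k := by
  simp only [heightAt_eq_pathHeight_take, List.take_append_of_le_length h]

lemma heightAt_append_length_add (a b : List Bool) (k : ℕ) :
    heightAt (a ++ b) (a.length + k) = pathHeight a + heightAt b k := by
  simp only [heightAt_eq_pathHeight_take, List.take_length_add_append, pathHeight_append]

lemma heightAt_take (l : List Bool) (n k : ℕ) :
    heightAt (l.take n) k = heightAt l (min k n) := by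
  simp only [heightAt_eq_pathHeight_take, List.take_take]

lemma heightAt_succ {p : List Bool} {k : ℕ} {x : Bool} (h : p[k]? = some x) :
    heightAt p (k + 1) = heightAt p k + stepValue x := by
  simp [heightAt_eq_pathHeight_take, List.take_add_one, h]

lemma isDyck_iff {p : List Bool} :
    IsDyck p ↔ (∀ k, 0 ≤ heightAt p k) ∧ pathHeight p = 0 := by
  rw [IsDyck, heightAt_of_length_le le_rfl]

-- Cut `l` just before its first step down to height `-1`.
lemma exists_isDyck_append_false {l : List Bool} {k : ℕ} (hk : heightAt l k < 0) :
    ∃ q r, IsDyck q ∧ l = q ++ false :: r := by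
  classical
  have hex : ∃ k, heightAt l k < 0 := ⟨k, hk⟩
  obtain ⟨j, hj⟩ : ∃ j, Nat.find hex = j + 1 :=
    Nat.exists_eq_succ_of_ne_zero fun h => by simpa [h] using Nat.find_spec hex
  have hneg : heightAt l (j + 1) < 0 := hj ▸ Nat.find_spec hex
  have hbefore (i : ℕ) (hi : i ≤ j) : 0 ≤ heightAt l i :=
    not_lt.1 (Nat.find_min hex (by omega))
  have hjl : j < l.length := by
    by_contra! h
    have := hbefore j le_rfl
    rw [heightAt_of_length_le h, ← heightAt_of_length_le (k := j + 1) (by omega)] at this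
    omega
  have hstep := heightAt_succ (List.getElem?_eq_getElem hjl)
  have hfalse : l[j] = false := by
    by_contra h
    simp only [Bool.not_eq_false] at h
    have := hbefore j le_rfl
    rw [h, stepValue_true] at hstep
    omega
  refine ⟨l.take j, l.drop (j + 1), isDyck_iff.2 ⟨fun i => ?_, ?_⟩, ?_⟩
  · rw [heightAt_take]; exact hbefore _ (min_le_right _ _)
  · have := hbefore j le_rfl
    rw [← heightAt_eq_pathHeight_take]
    rw [hfalse, stepValue_false] at hstep
    omega
  · rw [← hfalse, ← List.drop_eq_getElem_cons hjl, List.take_append_drop]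

namespace IsDyck

variable {p q r : List Bool}

lemma pathHeight_eq_zero (hp : IsDyck p) : pathHeight p = 0 := (isDyck_iff.1 hp).2

lemma nil : IsDyck [] := isDyck_iff.2 ⟨fun _ => by simp [heightAt_eq_pathHeight_take], rfl⟩

lemma length_even (hp : IsDyck p) : ∃ n, p.length = 2 * n := by
  have h := hp.pathHeight_eq_zero
  have := List.count_true_add_count_false p
  simp only [pathHeight] at h
  exact ⟨p.count true, by omega⟩

lemma append (hp : IsDyck p) (hq : IsDyck q) : IsDyck (p ++ q) := by
  refine isDyck_iff.2 ⟨fun k => ?_, by simp [hp.pathHeight_eq_zero, hq.pathHeight_eq_zero]⟩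
  rcases le_or_gt k p.length with hk | hk
  · rw [heightAt_append_of_le _ hk]; exact hp.1 k
  · obtain ⟨j, rfl⟩ := Nat.exists_eq_add_of_lt hk
    rw [add_assoc, heightAt_append_length_add, hp.pathHeight_eq_zero, zero_add]
    exact hq.1 _

lemma of_append (hpq : IsDyck (p ++ q)) (hp : IsDyck p) : IsDyck q := by
  have key (k : ℕ) : heightAt q k = heightAt (p ++ q) (p.length + k) := by
    rw [heightAt_append_length_add, hp.pathHeight_eq_zero, zero_add]
  refine isDyck_iff.2 ⟨fun k => key k ▸ hpq.1 _, ?_⟩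
  have := hpq.pathHeight_eq_zero
  rwa [pathHeight_append, hp.pathHeight_eq_zero, zero_add] at this

lemma lift (hq : IsDyck q) : IsDyck (true :: q ++ [false]) := by
  refine isDyck_iff.2 ⟨fun k => ?_, by simp [hq.pathHeight_eq_zero]⟩
  rcases k with _ | k
  · rfl
  rw [List.cons_append, heightAt_cons_succ, stepValue_true]
  rcases le_or_gt k q.length with hk | hk
  · rw [heightAt_append_of_le _ hk]
    linarith [hq.1 k]
  · rw [heightAt_of_length_le (by rw [List.length_append, List.length_singleton]; omega)]
    simp [hq.pathHeight_eq_zero]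

lemma arch (hq : IsDyck q) (hr : IsDyck r) : IsDyck (true :: q ++ false :: r) := by
  simpa using hq.lift.append hr

lemma head?_ne_some_false (hp : IsDyck p) : p.head? ≠ some false := by
  rw [Ne, List.head?_eq_some_iff]
  rintro ⟨t, rfl⟩
  have := hp.1 1
  simp at this

lemma getLast?_ne_some_true (hp : IsDyck p) : p.getLast? ≠ some true := by
  rw [Ne, List.getLast?_eq_some_iff]
  rintro ⟨t, rfl⟩
  have h1 := hp.1 t.length
  have h2 := hp.pathHeight_eq_zero
  rw [heightAt_append_of_le _ le_rfl, heightAt_of_length_le le_rfl] at h1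
  simp only [pathHeight_append, pathHeight_cons, stepValue_true, pathHeight_nil] at h2
  omega

lemma one_le_of_hasPeakAt (hp : IsDyck p) {h : ℤ} (hpk : HasPeakAt p h) : 1 ≤ h := by
  obtain ⟨i, hup, -, rfl⟩ := hpk
  rw [heightAt_succ hup, stepValue_true]
  linarith [hp.1 i]

lemma exists_arch (hp : IsDyck p) (hne : p ≠ []) :
    ∃ q r, IsDyck q ∧ IsDyck r ∧ p = true :: q ++ false :: r := by
  obtain ⟨x, t, rfl⟩ := List.exists_cons_of_ne_nil hne
  obtain rfl : x = true := by
    by_contra hx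
    exact hp.head?_ne_some_false (by simpa using hx)
  have ht : heightAt t t.length < 0 := by
    have := hp.pathHeight_eq_zero
    rw [heightAt_of_length_le le_rfl]
    rw [pathHeight_cons, stepValue_true] at this
    omega
  obtain ⟨q, r, hq, rfl⟩ := exists_isDyck_append_false ht
  refine ⟨q, r, hq, IsDyck.of_append (p := true :: q ++ [false]) ?_ hq.lift, rfl⟩
  simpa using hp

lemma append_false_inj {q' r' : List Bool} (hq : IsDyck q) (hq' : IsDyck q')
    (h : q ++ false :: r = q' ++ false :: r') : q = q' ∧ r = r' := by
  -- After `a.length + 1` steps the path is at height `-1`, so no Dyck prefix is longer than `a`.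
  have not_lt {a b a' b' : List Bool} (ha : IsDyck a) (ha' : IsDyck a')
      (hab : a ++ false :: b = a' ++ false :: b') : ¬ a.length < a'.length := fun hlt => by
    have h1 := heightAt_append_length_add a (false :: b) 1
    rw [hab, heightAt_append_of_le _ hlt, ha.pathHeight_eq_zero, heightAt_cons_succ,
      stepValue_false, heightAt_zero] at h1
    linarith [ha'.1 (a.length + 1)]
  have := not_lt hq hq' h
  have := not_lt hq' hq h.symm
  exact (List.append_inj h (by omega)).imp id (List.cons_injective ·)

lemma arch_inj {q' r' : List Bool} (hq : IsDyck q) (hq' : IsDyck q')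
    (h : true :: q ++ false :: r = true :: q' ++ false :: r') : q = q' ∧ r = r' :=
  append_false_inj hq hq' (List.cons_injective h)

end IsDyck

lemma not_hasPeakAt_nil (h : ℤ) : ¬ HasPeakAt [] h := by
  rintro ⟨i, hi, -⟩
  simp at hi

lemma hasPeakAt_cons (x : Bool) (l : List Bool) (h : ℤ) :
    HasPeakAt (x :: l) h ↔
      (x = true ∧ l.head? = some false ∧ h = 1) ∨ HasPeakAt l (h - stepValue x) := by
  constructor
  · rintro ⟨_ | i, hup, hdown, rfl⟩
    · simp only [List.getElem?_cons_zero, Option.some.injEq] at hup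
      subst hup
      simp_all [List.head?_eq_getElem?, stepValue]
    · exact Or.inr ⟨i, by simpa using hup, by simpa using hdown, by simp⟩
  · rintro (⟨rfl, hdown, rfl⟩ | ⟨i, hup, hdown, hh⟩)
    · exact ⟨0, rfl, by simpa [List.head?_eq_getElem?] using hdown, by simp [stepValue]⟩
    · exact ⟨i + 1, by simpa using hup, by simpa using hdown, by simp [hh]⟩

lemma hasPeakAt_append (a b : List Bool) (h : ℤ) :
    HasPeakAt (a ++ b) h ↔ HasPeakAt a h ∨ HasPeakAt b (h - pathHeight a) ∨
      (a.getLast? = some true ∧ b.head? = some false ∧ pathHeight a = h) := by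
  induction a generalizing h with
  | nil => simp [not_hasPeakAt_nil]
  | cons x a ih =>
    rw [List.cons_append, hasPeakAt_cons, ih, hasPeakAt_cons, pathHeight_cons, sub_sub]
    rcases a with _ | ⟨y, a⟩
    · cases x <;> simp [not_hasPeakAt_nil, stepValue, eq_comm, or_comm]
    · have e : pathHeight (y :: a) = h - stepValue x ↔ stepValue x + pathHeight (y :: a) = h := by
        constructor <;> intro <;> linarith
      simp only [List.cons_append, List.head?_cons, List.getLast?_cons_cons, e]
      tauto

lemma hasPeakAt_arch_iff {q r : List Bool} (hq : IsDyck q) (h : ℤ) :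
    HasPeakAt (true :: q ++ false :: r) h ↔
      (q = [] ∧ h = 1) ∨ HasPeakAt q (h - 1) ∨ HasPeakAt r h := by
  rw [hasPeakAt_append, hasPeakAt_cons, hasPeakAt_cons]
  rcases q with _ | ⟨y, q⟩
  · simp [not_hasPeakAt_nil, stepValue, eq_comm, or_comm]
  · obtain rfl : y = true := by simpa using hq.head?_ne_some_false
    have hlast := hq.getLast?_ne_some_true
    rw [pathHeight_cons, hq.pathHeight_eq_zero]
    simp [List.getLast?_cons_cons, hlast, stepValue]

def NoPeak (Φ : ℤ → Prop) (p : List Bool) : Prop := ∀ h, Φ h → ¬ HasPeakAt p h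

lemma noPeak_arch_iff {Φ : ℤ → Prop} {q r : List Bool} (hq : IsDyck q) :
    NoPeak Φ (true :: q ++ false :: r) ↔
      (q = [] → ¬ Φ 1) ∧ NoPeak (fun h => Φ (h + 1)) q ∧ NoPeak Φ r := by
  simp only [NoPeak, hasPeakAt_arch_iff hq]
  constructor
  · intro H
    exact ⟨fun hq0 hΦ => H 1 hΦ (.inl ⟨hq0, rfl⟩),
      fun h hΦ hpk => H (h + 1) hΦ (.inr (.inl (by simpa using hpk))),
      fun h hΦ hpk => H h hΦ (.inr (.inr hpk))⟩
  · rintro ⟨H0, Hq, Hr⟩ h hΦ (⟨hq0, rfl⟩ | hpk | hpk)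
    · exact H0 hq0 hΦ
    · exact Hq (h - 1) (by simpa using hΦ) hpk
    · exact Hr h hΦ hpk

def UpPrefix (m : ℕ) (p : List Bool) : Prop := ∀ j < m, p[j]? = some true

def NoUpBlock (m : ℕ) (p : List Bool) : Prop := ∀ i, ¬ UpPrefix m (p.drop i)

lemma UpPrefix.mono {m m' : ℕ} {p : List Bool} (h : m ≤ m') (hp : UpPrefix m' p) :
    UpPrefix m p :=
  fun j hj => hp j (by omega)

lemma upPrefix_zero (p : List Bool) : UpPrefix 0 p := fun _ hj => absurd hj (Nat.not_lt_zero _)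

lemma not_upPrefix_succ_nil (m : ℕ) : ¬ UpPrefix (m + 1) [] := fun h => by simpa using h 0

lemma upPrefix_succ_cons {m : ℕ} {x : Bool} {l : List Bool} :
    UpPrefix (m + 1) (x :: l) ↔ x = true ∧ UpPrefix m l := by
  constructor
  · intro h
    exact ⟨by simpa using h 0 (by omega), fun j hj => by simpa using h (j + 1) (by omega)⟩
  · rintro ⟨rfl, h⟩ (_ | j) hj
    exacts [rfl, by simpa using h j (by omega)]

lemma upPrefix_append_false {m : ℕ} {l r : List Bool} :
    UpPrefix m (l ++ false :: r) ↔ UpPrefix m l := by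
  induction l generalizing m with
  | nil => cases m <;> simp [upPrefix_zero, upPrefix_succ_cons, not_upPrefix_succ_nil]
  | cons x l ih =>
    cases m
    · simp [upPrefix_zero]
    · rw [List.cons_append, upPrefix_succ_cons, upPrefix_succ_cons, ih]

lemma noUpBlock_cons {m : ℕ} {x : Bool} {l : List Bool} :
    NoUpBlock m (x :: l) ↔ ¬ UpPrefix m (x :: l) ∧ NoUpBlock m l := by
  constructor
  · intro h
    exact ⟨h 0, fun i => h (i + 1)⟩
  · rintro ⟨h0, h⟩ (_ | i)
    exacts [h0, h i]

lemma noUpBlock_nil {m : ℕ} (hm : 0 < m) : NoUpBlock m [] := by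
  obtain ⟨m, rfl⟩ := Nat.exists_eq_add_of_lt hm
  intro i
  simpa using not_upPrefix_succ_nil _

lemma noUpBlock_append_false {m : ℕ} (hm : 0 < m) {l r : List Bool} :
    NoUpBlock m (l ++ false :: r) ↔ NoUpBlock m l ∧ NoUpBlock m r := by
  induction l with
  | nil =>
    obtain ⟨m, rfl⟩ := Nat.exists_eq_add_of_lt hm
    simp [noUpBlock_cons, upPrefix_succ_cons, noUpBlock_nil]
  | cons x l ih =>
    rw [List.cons_append, noUpBlock_cons, noUpBlock_cons, ih, ← List.cons_append,
      upPrefix_append_false, and_assoc]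

lemma upPrefix_succ_arch {m : ℕ} {q r : List Bool} :
    UpPrefix (m + 1) (true :: q ++ false :: r) ↔ UpPrefix m q := by
  rw [List.cons_append, upPrefix_succ_cons, upPrefix_append_false]
  simp

lemma noUpBlock_succ_arch {m : ℕ} {q r : List Bool} :
    NoUpBlock (m + 1) (true :: q ++ false :: r) ↔
      ¬ UpPrefix m q ∧ NoUpBlock (m + 1) q ∧ NoUpBlock (m + 1) r := by
  rw [noUpBlock_append_false m.succ_pos, noUpBlock_cons, upPrefix_succ_cons, and_assoc]
  simp

section UpRuns

variable {p : List Bool}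

lemma exists_hasUpRun_of_start {i m : ℕ} (hm : 0 < m) (hstart : i = 0 ∨ p[i - 1]? = some false)
    (h : UpPrefix m (p.drop i)) : ∃ m' ≥ m, HasUpRun p m' := by
  classical
  have hex : ∃ t, p[i + t]? ≠ some true := ⟨p.length, by simp⟩
  have hrun (j : ℕ) (hj : j < Nat.find hex) : p[i + j]? = some true :=
    not_not.1 (Nat.find_min hex hj)
  have hend := Nat.find_spec hex
  have hmt : m ≤ Nat.find hex := by
    by_contra! hlt
    exact hend (by simpa using h _ hlt)
  refine ⟨Nat.find hex, hmt, i, hrun, hstart, ?_⟩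
  match hx : p[i + Nat.find hex]? with
  | none =>
    have h1 := (List.getElem?_eq_some_iff.1 (hrun (Nat.find hex - 1) (by omega))).1
    have h2 := List.getElem?_eq_none_iff.1 hx
    exact .inr (by omega)
  | some false => exact .inl rfl
  | some true => exact absurd hx hend

lemma exists_hasUpRun_of_upPrefix {i m : ℕ} (hm : 0 < m) (h : UpPrefix m (p.drop i)) :
    ∃ m' ≥ m, HasUpRun p m' := by
  induction i generalizing m with
  | zero => exact exists_hasUpRun_of_start hm (.inl rfl) h
  | succ i ih =>
    -- walk left until the block of up-steps starts
    match hx : p[i]? with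
    | some true =>
      obtain ⟨m', hm', hrun⟩ := ih m.succ_pos fun j hj => by
        cases j with
        | zero => simpa using hx
        | succ j => simpa [Nat.add_right_comm i 1 j, add_assoc] using h j (by omega)
      exact ⟨m', by omega, hrun⟩
    | some false => exact exists_hasUpRun_of_start hm (.inr hx) h
    | none =>
      have h1 := (List.getElem?_eq_some_iff.1 (h 0 hm)).1
      have h2 := List.getElem?_eq_none_iff.1 hx
      rw [List.length_drop] at h1
      omega

lemma forall_not_hasUpRun_iff (k : ℕ) :
    (∀ m, k < m → ¬ HasUpRun p m) ↔ NoUpBlock (k + 1) p := by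
  constructor
  · intro H i hi
    obtain ⟨m', hm', hrun⟩ := exists_hasUpRun_of_upPrefix k.succ_pos hi
    exact H m' (by omega) hrun
  · rintro H m hm ⟨i, hrun, -, -⟩
    exact H i fun j hj => by simpa using hrun j (by omega)

end UpRuns

section Counting

variable {P Q R : List Bool → Prop}

lemma finite_dyck (P : List Bool → Prop) (n : ℕ) :
    {p : List Bool | p.length = 2 * n ∧ IsDyck p ∧ P p}.Finite :=
  (List.finite_length_eq Bool (2 * n)).subset fun _ hp => hp.1

noncomputable def dyckCount (P : List Bool → Prop) (n : ℕ) : ℕ :=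
  Set.ncard {p : List Bool | p.length = 2 * n ∧ IsDyck p ∧ P p}

noncomputable def dyckFinset (P : List Bool → Prop) (n : ℕ) : Finset (List Bool) :=
  (finite_dyck P n).toFinset

lemma mem_dyckFinset {p : List Bool} {n : ℕ} :
    p ∈ dyckFinset P n ↔ p.length = 2 * n ∧ IsDyck p ∧ P p :=
  Set.Finite.mem_toFinset _

lemma dyckCount_eq_card (P : List Bool → Prop) (n : ℕ) :
    dyckCount P n = (dyckFinset P n).card :=
  Set.ncard_eq_toFinset_card _ _

lemma dyckCount_congr (h : ∀ p, IsDyck p → (P p ↔ Q p)) (n : ℕ) :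
    dyckCount P n = dyckCount Q n := by
  unfold dyckCount
  congr 1
  ext p
  exact and_congr_right fun _ => and_congr_right (h p)

lemma dyckCount_eq_zero {n : ℕ} (h : ∀ p, p.length = 2 * n → IsDyck p → ¬ P p) :
    dyckCount P n = 0 := by
  unfold dyckCount
  convert Set.ncard_empty (List Bool)
  exact Set.eq_empty_of_forall_notMem fun p ⟨hl, hp, hP⟩ => h p hl hp hP

lemma dyckCount_zero (hP : P []) : dyckCount P 0 = 1 := by
  unfold dyckCount
  convert Set.ncard_singleton ([] : List Bool)
  ext p
  simpa [List.length_eq_zero_iff] using fun hp : p = [] => hp ▸ ⟨IsDyck.nil, hP⟩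

lemma dyckCount_and_ne_nil_zero : dyckCount (fun p => P p ∧ p ≠ []) 0 = 0 :=
  dyckCount_eq_zero fun _ hl _ hP => hP.2 (List.eq_nil_of_length_eq_zero hl)

lemma dyckCount_and_ne_nil_succ (n : ℕ) :
    dyckCount (fun p => P p ∧ p ≠ []) (n + 1) = dyckCount P (n + 1) := by
  unfold dyckCount
  congr 1
  ext p
  constructor
  · rintro ⟨hl, hp, hP, -⟩
    exact ⟨hl, hp, hP⟩
  · rintro ⟨hl, hp, hP⟩
    exact ⟨hl, hp, hP, by rintro rfl; simp at hl⟩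

lemma length_arch (q r : List Bool) :
    (true :: q ++ false :: r).length = q.length + r.length + 2 := by
  simp only [List.cons_append, List.length_cons, List.length_append]
  omega

lemma dyckCount_arch (h : ∀ q r, IsDyck q → IsDyck r →
      (P (true :: q ++ false :: r) ↔ Q q ∧ R r)) (n : ℕ) :
    dyckCount P (n + 1) = ∑ x ∈ antidiagonal n, dyckCount Q x.1 * dyckCount R x.2 := by
  simp only [dyckCount_eq_card, ← card_product]
  rw [← card_sigma]
  symm
  refine card_bij (fun x _ => true :: x.2.1 ++ false :: x.2.2) ?_ ?_ ?_
  · rintro ⟨⟨i, j⟩, q, r⟩ hx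
    simp only [mem_sigma, mem_product, mem_dyckFinset, HasAntidiagonal.mem_antidiagonal] at hx ⊢
    obtain ⟨hij, ⟨hql, hq, hQ⟩, hrl, hr, hR⟩ := hx
    exact ⟨by rw [length_arch]; omega, hq.arch hr, (h q r hq hr).2 ⟨hQ, hR⟩⟩
  · rintro ⟨⟨i, j⟩, q, r⟩ hx ⟨⟨i', j'⟩, q', r'⟩ hx' heq
    simp only [mem_sigma, mem_product, mem_dyckFinset, HasAntidiagonal.mem_antidiagonal] at hx hx'
    obtain ⟨rfl, rfl⟩ := IsDyck.arch_inj hx.2.1.2.1 hx'.2.1.2.1 heq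
    obtain ⟨rfl, rfl⟩ : i = i' ∧ j = j' := by omega
    rfl
  · intro p hp
    obtain ⟨hl, hp, hP⟩ := mem_dyckFinset.1 hp
    obtain ⟨q, r, hq, hr, rfl⟩ := hp.exists_arch (by rintro rfl; simp at hl)
    obtain ⟨i, hi⟩ := hq.length_even
    obtain ⟨j, hj⟩ := hr.length_even
    have hQR := (h q r hq hr).1 hP
    refine ⟨⟨(i, j), q, r⟩, ?_, rfl⟩
    simp only [mem_sigma, mem_product, mem_dyckFinset, HasAntidiagonal.mem_antidiagonal]
    refine ⟨?_, ⟨hi, hq, hQR.1⟩, hj, hr, hQR.2⟩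
    rw [length_arch] at hl
    omega

end Counting

-- A peak at height `h` of a subpath lifted by `s` levels is at height `h + s` in the whole path.
def ForbiddenHeight (s : ℕ) (h : ℤ) : Prop := Odd (h + s) ∧ 3 ≤ h + s

lemma forbiddenHeight_succ (s : ℕ) :
    (fun h => ForbiddenHeight s (h + 1)) = ForbiddenHeight (s + 1) := by
  funext h
  simp only [ForbiddenHeight]
  push_cast
  ring_nf

lemma noPeak_forbiddenHeight_add_two {s : ℕ} (hs : 1 ≤ s) {p : List Bool} (hp : IsDyck p) :
    NoPeak (ForbiddenHeight (s + 2)) p ↔ NoPeak (ForbiddenHeight s) p := by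
  have key {h : ℤ} (hpk : HasPeakAt p h) :
      ForbiddenHeight (s + 2) h ↔ ForbiddenHeight s h := by
    have := hp.one_le_of_hasPeakAt hpk
    simp only [ForbiddenHeight, Int.odd_iff]
    push_cast
    omega
  exact forall_congr' fun h =>
    ⟨fun H hF hpk => H ((key hpk).2 hF) hpk, fun H hF hpk => H ((key hpk).1 hF) hpk⟩

def Admissible (s b : ℕ) (p : List Bool) : Prop :=
  NoPeak (ForbiddenHeight s) p ∧ NoUpBlock 4 p ∧ ¬ UpPrefix (b + 1) p

lemma admissible_nil (s b : ℕ) : Admissible s b [] :=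
  ⟨fun h _ => not_hasPeakAt_nil h, noUpBlock_nil (by norm_num), not_upPrefix_succ_nil b⟩

lemma admissible_arch_iff {s b : ℕ} (hb : b ≤ 2) {q r : List Bool} (hq : IsDyck q) :
    Admissible s (b + 1) (true :: q ++ false :: r) ↔
      (Admissible (s + 1) b q ∧ (q = [] → ¬ ForbiddenHeight s 1)) ∧ Admissible s 3 r := by
  simp only [Admissible, noPeak_arch_iff hq, forbiddenHeight_succ, noUpBlock_succ_arch (m := 3),
    upPrefix_succ_arch]
  constructor
  · rintro ⟨⟨h1, hq, hr⟩, ⟨-, hq', hr'⟩, hb'⟩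
    exact ⟨⟨⟨hq, hq', hb'⟩, h1⟩, hr, hr', hr' 0⟩
  · rintro ⟨⟨⟨hq, hq', hb'⟩, h1⟩, hr, hr', -⟩
    exact ⟨⟨h1, hq, hr⟩, ⟨fun h => hb' (h.mono (by omega)), hq', hr'⟩, hb'⟩

lemma not_forbiddenHeight_one {s : ℕ} (hs : s ≤ 1) : ¬ ForbiddenHeight s 1 := fun h => by
  have := h.2
  omega

lemma dyckCount_admissible_zero (s b : ℕ) : dyckCount (Admissible s b) 0 = 1 :=
  dyckCount_zero (admissible_nil s b)

lemma dyckCount_admissible_bound_zero (s n : ℕ) : dyckCount (Admissible s 0) (n + 1) = 0 := by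
  refine dyckCount_eq_zero fun p hl hp hadm => hadm.2.2 ?_
  rcases p with _ | ⟨x, t⟩
  · simp at hl
  obtain rfl : x = true := by simpa using hp.head?_ne_some_false
  exact upPrefix_succ_cons.2 ⟨rfl, upPrefix_zero t⟩

lemma dyckCount_admissible_succ {s b : ℕ} (hs : ¬ ForbiddenHeight s 1) (hb : b ≤ 2) (n : ℕ) :
    dyckCount (Admissible s (b + 1)) (n + 1) =
      ∑ x ∈ antidiagonal n,
        dyckCount (Admissible (s + 1) b) x.1 * dyckCount (Admissible s 3) x.2 :=
  dyckCount_arch (fun _ _ hq _ => by rw [admissible_arch_iff hb hq]; simp [hs]) n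

lemma dyckCount_admissible_two_succ {b : ℕ} (hb : b ≤ 2) (n : ℕ) :
    dyckCount (Admissible 2 (b + 1)) (n + 1) =
      ∑ x ∈ antidiagonal n,
        dyckCount (fun q => Admissible 1 b q ∧ q ≠ []) x.1 * dyckCount (Admissible 2 3) x.2 := by
  -- for lift `2` an empty `q` makes `UD` a peak at height `3`, and lift `3` acts as lift `1`
  have h21 : ForbiddenHeight 2 1 := ⟨by decide, by norm_num⟩
  refine dyckCount_arch (fun q _ hq _ => ?_) n
  rw [admissible_arch_iff hb hq]
  simp only [Admissible, noPeak_forbiddenHeight_add_two le_rfl hq, h21, not_true, imp_false]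

lemma dyckCount_admissible_two_bound_one (n : ℕ) : dyckCount (Admissible 2 1) (n + 1) = 0 := by
  rw [dyckCount_admissible_two_succ (b := 0) (by norm_num)]
  refine sum_eq_zero fun x _ => ?_
  rcases x with ⟨_ | i, j⟩
  · simp [dyckCount_and_ne_nil_zero]
  · simp [dyckCount_and_ne_nil_succ, dyckCount_admissible_bound_zero]

lemma dyckCount_admissible_one_succ_of_le_one {b : ℕ} (hb : b ≤ 1) (n : ℕ) :
    dyckCount (Admissible 1 (b + 1)) (n + 1) = dyckCount (Admissible 1 3) n := by
  rw [dyckCount_admissible_succ (not_forbiddenHeight_one le_rfl) (by omega),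
    sum_eq_single_of_mem (0, n) (by simp), dyckCount_admissible_zero, one_mul]
  rintro ⟨_ | i, j⟩ hx hne
  · simp_all
  · interval_cases b
    · rw [dyckCount_admissible_bound_zero, zero_mul]
    · rw [dyckCount_admissible_two_bound_one, zero_mul]

lemma dyckCount_admissible_two_at_one {b : ℕ} (hb : b ≤ 2) :
    dyckCount (Admissible 2 (b + 1)) 1 = 0 := by
  simp [dyckCount_admissible_two_succ hb 0, dyckCount_and_ne_nil_zero]

lemma dyckCount_admissible_two_add_two {b : ℕ} (hb : b ≤ 1) (n : ℕ) :
    dyckCount (Admissible 2 (b + 2)) (n + 2) =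
      ∑ x ∈ antidiagonal n, dyckCount (Admissible 1 3) x.1 * dyckCount (Admissible 2 3) x.2 := by
  rw [dyckCount_admissible_two_succ (by omega), Nat.sum_antidiagonal_succ,
    dyckCount_and_ne_nil_zero, zero_mul, zero_add]
  simp only [dyckCount_and_ne_nil_succ, dyckCount_admissible_one_succ_of_le_one hb]

lemma dyckCount_admissible_two_bound_two (n : ℕ) :
    dyckCount (Admissible 2 2) n = dyckCount (Admissible 2 3) n := by
  match n with
  | 0 => simp only [dyckCount_admissible_zero]
  | 1 => rw [dyckCount_admissible_two_at_one (b := 1) (by norm_num),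
      dyckCount_admissible_two_at_one (b := 2) le_rfl]
  | n + 2 => rw [dyckCount_admissible_two_add_two (b := 0) (by norm_num),
      dyckCount_admissible_two_add_two (b := 1) le_rfl]

lemma dyckCount_admissible_two_add_two_eq (n : ℕ) :
    dyckCount (Admissible 2 3) (n + 2) = dyckCount (Admissible 1 3) (n + 1) := by
  rw [dyckCount_admissible_two_add_two (b := 1) le_rfl,
    dyckCount_admissible_succ (b := 2) (not_forbiddenHeight_one le_rfl) le_rfl,
    ← Nat.sum_antidiagonal_swap]
  -- both sides are the convolution of the lift-`1` and lift-`2` counts, in opposite orders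
  refine sum_congr rfl fun x _ => ?_
  rw [Prod.fst_swap, Prod.snd_swap, mul_comm, dyckCount_admissible_two_bound_two]

lemma genCatalan_add_three (m : ℕ) :
    genCatalan (m + 3) = genCatalan (m + 2) +
      ∑ x ∈ antidiagonal m, genCatalan (x.1 + 1) * genCatalan x.2 := by
  rw [genCatalan, sum_attach (Icc 1 (m + 1)) fun k => genCatalan k * genCatalan (m + 1 - k),
    Nat.sum_antidiagonal_eq_sum_range_succ_mk, range_eq_Ico]
  congr 1
  rw [show Icc 1 (m + 1) = Ico (0 + 1) (m + 1 + 1) from rfl, ← sum_Ico_add']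
  exact sum_congr rfl fun k _ => by rw [Nat.add_sub_add_right]

lemma eq_genCatalan_of_rec {f : ℕ → ℕ} (h0 : f 0 = 1) (h1 : f 1 = 1) (h2 : f 2 = 1)
    (h : ∀ m, f (m + 3) = f (m + 2) + ∑ x ∈ antidiagonal m, f (x.1 + 1) * f x.2) (n : ℕ) :
    f n = genCatalan n := by
  induction n using Nat.strong_induction_on with
  | _ n ih =>
    match n with
    | 0 => rw [h0, genCatalan]
    | 1 => rw [h1, genCatalan]
    | 2 => rw [h2, genCatalan, genCatalan]; rfl
    | m + 3 =>
      rw [h, genCatalan_add_three, ih _ (by omega)]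
      refine congrArg _ (sum_congr rfl fun x hx => ?_)
      have := HasAntidiagonal.mem_antidiagonal.1 hx
      rw [ih _ (by omega), ih _ (by omega)]

lemma dyckCount_admissible_one_succ_eq_sum (n : ℕ) :
    dyckCount (Admissible 1 3) (n + 1) =
      ∑ x ∈ antidiagonal n, dyckCount (Admissible 2 3) x.1 * dyckCount (Admissible 1 3) x.2 := by
  rw [dyckCount_admissible_succ (b := 2) (not_forbiddenHeight_one le_rfl) le_rfl]
  exact sum_congr rfl fun x _ => by rw [dyckCount_admissible_two_bound_two]

lemma dyckCount_admissible_one_eq_genCatalan (n : ℕ) :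
    dyckCount (Admissible 1 3) n = genCatalan n := by
  have ho0 := dyckCount_admissible_zero 2 3
  have ho1 := dyckCount_admissible_two_at_one (b := 2) le_rfl
  refine eq_genCatalan_of_rec (dyckCount_admissible_zero 1 3) ?_ ?_ (fun m => ?_) n
  · simp [dyckCount_admissible_one_succ_eq_sum, ho0, dyckCount_admissible_zero]
  · simp [dyckCount_admissible_one_succ_eq_sum, Nat.sum_antidiagonal_succ, ho0, ho1,
      dyckCount_admissible_zero]
  · rw [dyckCount_admissible_one_succ_eq_sum, Nat.sum_antidiagonal_succ, Nat.sum_antidiagonal_succ,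
      ho0, ho1, one_mul, zero_mul, zero_add]
    simp only [dyckCount_admissible_two_add_two_eq]

lemma dyckCount_admissible_zero_eq_genCatalan (n : ℕ) :
    dyckCount (Admissible 0 3) n = genCatalan (n + 1) := by
  have hrec (m : ℕ) : dyckCount (Admissible 0 3) (m + 1) =
      ∑ x ∈ antidiagonal m, dyckCount (Admissible 1 2) x.1 * dyckCount (Admissible 0 3) x.2 :=
    dyckCount_admissible_succ (not_forbiddenHeight_one zero_le_one) le_rfl m
  induction n using Nat.strong_induction_on with
  | _ n ih =>
    match n with
    | 0 => rw [dyckCount_admissible_zero, genCatalan]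
    | 1 => simp [hrec, dyckCount_admissible_zero, genCatalan]
    | m + 2 =>
      rw [hrec, Nat.sum_antidiagonal_succ, dyckCount_admissible_zero, one_mul, ih _ (by omega),
        genCatalan_add_three, ← Nat.sum_antidiagonal_swap]
      refine congrArg _ (sum_congr rfl fun x hx => ?_)
      have := HasAntidiagonal.mem_antidiagonal.1 hx
      rw [Prod.fst_swap, Prod.snd_swap, dyckCount_admissible_one_succ_of_le_one (b := 1) le_rfl,
        dyckCount_admissible_one_eq_genCatalan, ih _ (by omega), mul_comm]

lemma forbiddenHeight_zero_iff {h : ℤ} : ForbiddenHeight 0 h ↔ ∃ r : ℕ, h = 2 * r + 3 := by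
  simp only [ForbiddenHeight, Nat.cast_zero, add_zero]
  constructor
  · rintro ⟨⟨c, rfl⟩, h3⟩
    exact ⟨(c - 1).toNat, by omega⟩
  · rintro ⟨r, rfl⟩
    exact ⟨⟨r + 1, by ring⟩, by omega⟩

lemma admissible_zero_three_iff {p : List Bool} :
    Admissible 0 3 p ↔
      (∀ r : ℕ, ¬ HasPeakAt p (2 * (r : ℤ) + 3)) ∧ ∀ m, 3 < m → ¬ HasUpRun p m := by
  rw [forall_not_hasUpRun_iff 3]
  constructor
  · rintro ⟨hpeak, hblock, -⟩
    exact ⟨fun r => hpeak _ (forbiddenHeight_zero_iff.2 ⟨r, rfl⟩), hblock⟩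
  · rintro ⟨hpeak, hblock⟩
    refine ⟨fun h hF => ?_, hblock, hblock 0⟩
    obtain ⟨r, rfl⟩ := forbiddenHeight_zero_iff.1 hF
    exact hpeak r

/-- The number of Dyck paths of semilength `n` with no peak at any height in
`{2r+3 : r ≥ 0}` and no up-run of length greater than 3 equals the `(n+1)`-th
generalized Catalan number. -/
theorem stmt3 (n : ℕ) :
    Set.ncard {p : List Bool | p.length = 2 * n ∧ IsDyck p ∧
        (∀ r : ℕ, ¬ HasPeakAt p (2 * (r : ℤ) + 3)) ∧
        (∀ m : ℕ, 3 < m → ¬ HasUpRun p m)} = genCatalan (n + 1) :=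
  (dyckCount_congr (fun _ _ => admissible_zero_three_iff) n).symm.trans
    (dyckCount_admissible_zero_eq_genCatalan n)
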